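/- arXiv:1808.08019 — 3 statements merged into one kernel-verified Lean document; each statement's English description precedes it below -/
import Mathlib

section
/- Let p be an odd prime, m ≥ 1, and g an odd common primitive root modulo p^j and 2p^j for all 1 ≤ j ≤ m. Then Z/2p^m Z is the disjoint union of {0}, {p^m}, and the sets p^{m−j}·2·D_i^{(p^j)} and p^{m−j} D_i^{(2p^j)} for 1 ≤ j ≤ m, 0 ≤ i < d_j. -/
/-!
Every residue `x` modulo `N = 2p^m` factors as `x = c·u` with `c = gcd(x, N)` and `u` a unit modulo
`N / c`, and `c` is `2p^{m-j}` or `p^{m-j}` with `0 ≤ j ≤ m`. The case `j = 0` gives `0` and `p^m`;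
otherwise `g` is a primitive root modulo `N / c ∈ {p^j, 2p^j}`, so `u ≡ g^s` with `s < φ(N / c) = d_j e`,
and `s = i + d_j t` puts `x` in the `i`-th class at level `c`. Conversely every element of a class at
level `c` has `gcd(x, N) = c`, which separates the levels, and within one level two classes meet only
if `g^{i + d_j t} ≡ g^{i' + d_j t'}`, i.e. `i + d_j t ≡ i' + d_j t' (mod d_j e)`, forcing `i = i'`.
-/

open Nat Finset

theorem coprime_of_orderOf_eq_totient {M g : ℕ} [NeZero M]
    (hg : orderOf (g : ZMod M) = φ M) : g.Coprime M :=
  (ZMod.isUnit_iff_coprime g M).mp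
    (orderOf_pos_iff.mp (hg ▸ totient_pos.mpr (NeZero.pos M))).isUnit

theorem exists_pow_eq_of_orderOf_eq_totient {M : ℕ} [NeZero M] {g x : ZMod M}
    (hg : orderOf g = φ M) (hx : IsUnit x) : ∃ s < φ M, g ^ s = x := by
  have hfin : IsOfFinOrder g := orderOf_pos_iff.mp (hg ▸ totient_pos.mpr (NeZero.pos M))
  have htop : Subgroup.zpowers hfin.unit = ⊤ := by
    apply Subgroup.eq_top_of_card_eq
    rw [Nat.card_zpowers, ← orderOf_units, hfin.val_unit, hg, Nat.card_eq_fintype_card,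
      ZMod.card_units_eq_totient]
  obtain ⟨k, hk⟩ := mem_powers_iff_mem_zpowers.mpr (htop ▸ Subgroup.mem_top hx.unit)
  refine ⟨k % φ M, Nat.mod_lt _ (totient_pos.mpr (NeZero.pos M)), ?_⟩
  rw [← hg, pow_mod_orderOf]
  simpa using congrArg Units.val hk

theorem ZMod.gcd_val_natCast (N a : ℕ) : (a : ZMod N).val.gcd N = a.gcd N := by
  rw [ZMod.val_natCast, ← Nat.gcd_rec, Nat.gcd_comm]

theorem ZMod.exists_eq_natCast_mul_coprime {N : ℕ} [NeZero N] (x : ZMod N) :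
    ∃ c M u : ℕ, c * M = N ∧ u.Coprime M ∧ x = ((c * u : ℕ) : ZMod N) := by
  have hc : 0 < x.val.gcd N := Nat.gcd_pos_of_pos_right _ (NeZero.pos N)
  refine ⟨x.val.gcd N, N / x.val.gcd N, x.val / x.val.gcd N,
    Nat.mul_div_cancel' (Nat.gcd_dvd_right _ _), coprime_div_gcd_div_gcd hc, ?_⟩
  rw [Nat.mul_div_cancel' (Nat.gcd_dvd_left _ _), ZMod.natCast_zmod_val]

/-- The set `c · D_i` in `ZMod N`, where `D_i = {g^(i + d t) : t < e}` is the `i`-th cyclotomic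
class of order `d`; the theorem uses `N = 2p^m`, `d = d_j` and `c = 2p^{m-j}` or `c = p^{m-j}`. -/
def scaledCyclotomicClass (N c g d e i : ℕ) : Set (ZMod N) :=
  {y | ∃ t < e, y = ((c * g ^ (i + d * t) : ℕ) : ZMod N)}

section scaledCyclotomicClass

variable {N c M g d e : ℕ}

theorem gcd_val_of_mem_scaledCyclotomicClass (hN : c * M = N) (hg : g.Coprime M) {i : ℕ}
    {y : ZMod N} (hy : y ∈ scaledCyclotomicClass N c g d e i) : y.val.gcd N = c := by
  obtain ⟨t, -, rfl⟩ := hy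
  rw [ZMod.gcd_val_natCast, ← hN, Nat.gcd_mul_left, (hg.pow_left _).gcd_eq_one, mul_one]

theorem disjoint_scaledCyclotomicClass (hN : c * M = N) (hc : c ≠ 0)
    (hord : orderOf (g : ZMod M) = d * e) {i i' : ℕ} (hi : i < d) (hi' : i' < d) (hne : i ≠ i') :
    Disjoint (scaledCyclotomicClass N c g d e i) (scaledCyclotomicClass N c g d e i') := by
  rw [Set.disjoint_left]
  rintro _ ⟨t, ht, rfl⟩ ⟨t', -, h⟩
  have hfin : IsOfFinOrder (g : ZMod M) :=
    orderOf_pos_iff.mp (hord ▸ Nat.mul_pos (by omega) (by omega))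
  rw [ZMod.natCast_eq_natCast_iff, ← hN] at h
  have hpow : (g : ZMod M) ^ (i + d * t) = (g : ZMod M) ^ (i' + d * t') := by
    exact_mod_cast (ZMod.natCast_eq_natCast_iff _ _ _).mpr (Nat.ModEq.mul_left_cancel' hc h)
  have hmod : i + d * t ≡ i' + d * t' [MOD d] := by
    rw [hfin.pow_eq_pow_iff_modEq, hord] at hpow
    exact hpow.of_mul_right e
  apply hne
  simpa [Nat.ModEq, Nat.mod_eq_of_lt hi, Nat.mod_eq_of_lt hi'] using hmod

theorem exists_natCast_mul_mem_scaledCyclotomicClass [NeZero M] (hN : c * M = N)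
    (hord : orderOf (g : ZMod M) = φ M) (hde : φ M = d * e) {u : ℕ} (hu : u.Coprime M) :
    ∃ i < d, ((c * u : ℕ) : ZMod N) ∈ scaledCyclotomicClass N c g d e i := by
  obtain ⟨s, hs, hgs⟩ :=
    exists_pow_eq_of_orderOf_eq_totient hord ((ZMod.isUnit_iff_coprime u M).mpr hu)
  rw [hde] at hs
  have hd : 0 < d := Nat.pos_of_ne_zero (by rintro rfl; simp at hs)
  refine ⟨s % d, Nat.mod_lt _ hd, s / d, Nat.div_lt_of_lt_mul hs, ?_⟩
  rw [Nat.mod_add_div, ZMod.natCast_eq_natCast_iff, ← hN]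
  refine Nat.ModEq.mul_left' c ((ZMod.natCast_eq_natCast_iff _ _ _).mp ?_)
  push_cast
  exact hgs.symm

end scaledCyclotomicClass

section
variable {p m e f g : ℕ}

theorem two_mul_pow_sub_mul_pow {j : ℕ} (hjm : j ≤ m) : 2 * p ^ (m - j) * p ^ j = 2 * p ^ m := by
  rw [mul_assoc, ← pow_add, Nat.sub_add_cancel hjm]

theorem pow_sub_mul_two_mul_pow {j : ℕ} (hjm : j ≤ m) : p ^ (m - j) * (2 * p ^ j) = 2 * p ^ m := by
  rw [mul_left_comm, ← pow_add, Nat.sub_add_cancel hjm]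

theorem exists_eq_of_mul_eq_two_mul_prime_pow {c M : ℕ} (hp : p.Prime)
    (h : c * M = 2 * p ^ m) :
    ∃ j ≤ m, (c = 2 * p ^ (m - j) ∧ M = p ^ j) ∨ (c = p ^ (m - j) ∧ M = 2 * p ^ j) := by
  obtain ⟨y, z, hy, hz, rfl⟩ := Nat.dvd_mul.mp (Dvd.intro_left c h)
  obtain ⟨j, hjm, rfl⟩ := (Nat.dvd_prime_pow hp).mp hz
  have hsplit := (two_mul_pow_sub_mul_pow (p := p) hjm).symm
  have hpj : 0 < p ^ j := pow_pos hp.pos j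
  refine ⟨j, hjm, ?_⟩
  rcases (Nat.dvd_prime Nat.prime_two).mp hy with rfl | rfl
  · refine Or.inl ⟨Nat.eq_of_mul_eq_mul_right hpj ?_, one_mul _⟩
    rw [← hsplit, ← h, one_mul]
  · refine Or.inr ⟨Nat.eq_of_mul_eq_mul_right (by positivity : 0 < 2 * p ^ j) ?_, rfl⟩
    rw [h, hsplit]
    ring

theorem totient_prime_pow_eq_mul (hp : p.Prime) (hef : p - 1 = e * f) {j : ℕ} (hj : 0 < j) :
    φ (p ^ j) = p ^ (j - 1) * f * e := by
  rw [totient_prime_pow hp hj, hef]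
  ring

theorem totient_two_mul_prime_pow_eq_mul (hp : p.Prime) (hop : Odd p) (hef : p - 1 = e * f)
    {j : ℕ} (hj : 0 < j) : φ (2 * p ^ j) = p ^ (j - 1) * f * e := by
  rw [totient_mul (coprime_two_left.mpr hop.pow), totient_two, one_mul,
    totient_prime_pow_eq_mul hp hef hj]

theorem exists_mem_scaledCyclotomicClass_of_ne (hp : p.Prime) (hop : Odd p) (hef : p - 1 = e * f)
    (hroot : ∀ j, 1 ≤ j → j ≤ m → orderOf (g : ZMod (p ^ j)) = φ (p ^ j))
    (hroot2 : ∀ j, 1 ≤ j → j ≤ m → orderOf (g : ZMod (2 * p ^ j)) = φ (2 * p ^ j))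
    {x : ZMod (2 * p ^ m)} (h0 : x ≠ 0) (hpm : x ≠ ((p ^ m : ℕ) : ZMod (2 * p ^ m))) :
    ∃ j ∈ Icc 1 m, ∃ i < p ^ (j - 1) * f,
      x ∈ scaledCyclotomicClass (2 * p ^ m) (2 * p ^ (m - j)) g (p ^ (j - 1) * f) e i ∪
        scaledCyclotomicClass (2 * p ^ m) (p ^ (m - j)) g (p ^ (j - 1) * f) e i := by
  have := hp.pos
  have : NeZero (2 * p ^ m) := ⟨by positivity⟩
  obtain ⟨c, M, u, hcM, hu, rfl⟩ := x.exists_eq_natCast_mul_coprime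
  obtain ⟨j, hjm, ⟨rfl, rfl⟩ | ⟨rfl, rfl⟩⟩ := exists_eq_of_mul_eq_two_mul_prime_pow hp hcM <;>
    rcases Nat.eq_zero_or_pos j with rfl | hj
  · exact absurd ((ZMod.natCast_eq_zero_iff _ _).mpr (Dvd.intro u (by simp))) h0
  · have : NeZero (p ^ j) := ⟨by positivity⟩
    obtain ⟨i, hi, hx⟩ := exists_natCast_mul_mem_scaledCyclotomicClass hcM (hroot j hj hjm)
      (totient_prime_pow_eq_mul hp hef hj) hu
    exact ⟨j, mem_Icc.mpr ⟨hj, hjm⟩, i, hi, Or.inl hx⟩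
  · refine absurd ((ZMod.natCast_eq_natCast_iff _ _ _).mpr ?_) hpm
    have hu2 : u ≡ 1 [MOD 2] := Nat.odd_iff.mp (coprime_two_right.mp (by simpa using hu))
    simpa [mul_comm 2] using hu2.mul_left' (p ^ m)
  · have : NeZero (2 * p ^ j) := ⟨by positivity⟩
    obtain ⟨i, hi, hx⟩ := exists_natCast_mul_mem_scaledCyclotomicClass hcM (hroot2 j hj hjm)
      (totient_two_mul_prime_pow_eq_mul hp hop hef hj) hu
    exact ⟨j, mem_Icc.mpr ⟨hj, hjm⟩, i, hi, Or.inr hx⟩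

theorem two_mul_pow_ne_pow (hop : Odd p) (a b : ℕ) : 2 * p ^ a ≠ p ^ b := by
  have := Nat.odd_iff.mp (hop.pow (n := b))
  omega

theorem eq_of_pow_sub_eq_pow_sub (hp : p.Prime) {a b : ℕ} (ha : a ≤ m) (hb : b ≤ m)
    (h : p ^ (m - a) = p ^ (m - b)) : a = b := by
  have := Nat.pow_right_injective hp.two_le h
  omega

theorem coprime_two_mul_pow_of_orderOf_eq_totient (hp : p.Prime)
    (hroot2 : ∀ j, 1 ≤ j → j ≤ m → orderOf (g : ZMod (2 * p ^ j)) = φ (2 * p ^ j))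
    {j : ℕ} (hj : j ∈ Icc 1 m) : g.Coprime (2 * p ^ j) := by
  have : NeZero (2 * p ^ j) := ⟨by have := hp.pos; positivity⟩
  exact coprime_of_orderOf_eq_totient (hroot2 j (mem_Icc.mp hj).1 (mem_Icc.mp hj).2)

theorem gcd_val_of_mem_two_mul_scaledCyclotomicClass (hp : p.Prime)
    (hroot2 : ∀ j, 1 ≤ j → j ≤ m → orderOf (g : ZMod (2 * p ^ j)) = φ (2 * p ^ j))
    {j d i : ℕ} (hj : j ∈ Icc 1 m) {y : ZMod (2 * p ^ m)}
    (hy : y ∈ scaledCyclotomicClass (2 * p ^ m) (2 * p ^ (m - j)) g d e i) :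
    y.val.gcd (2 * p ^ m) = 2 * p ^ (m - j) :=
  gcd_val_of_mem_scaledCyclotomicClass (two_mul_pow_sub_mul_pow (mem_Icc.mp hj).2)
    (coprime_two_mul_pow_of_orderOf_eq_totient hp hroot2 hj).coprime_mul_left_right hy

theorem gcd_val_of_mem_pow_scaledCyclotomicClass (hp : p.Prime)
    (hroot2 : ∀ j, 1 ≤ j → j ≤ m → orderOf (g : ZMod (2 * p ^ j)) = φ (2 * p ^ j))
    {j d i : ℕ} (hj : j ∈ Icc 1 m) {y : ZMod (2 * p ^ m)}
    (hy : y ∈ scaledCyclotomicClass (2 * p ^ m) (p ^ (m - j)) g d e i) :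
    y.val.gcd (2 * p ^ m) = p ^ (m - j) :=
  gcd_val_of_mem_scaledCyclotomicClass (pow_sub_mul_two_mul_pow (mem_Icc.mp hj).2)
    (coprime_two_mul_pow_of_orderOf_eq_totient hp hroot2 hj) hy

theorem zero_and_pow_notMem_scaledCyclotomicClass (hp : p.Prime) (hop : Odd p)
    (hroot2 : ∀ j, 1 ≤ j → j ≤ m → orderOf (g : ZMod (2 * p ^ j)) = φ (2 * p ^ j))
    {j d i : ℕ} (hj : j ∈ Icc 1 m) :
    (0 : ZMod (2 * p ^ m)) ∉ scaledCyclotomicClass (2 * p ^ m) (2 * p ^ (m - j)) g d e i ∪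
        scaledCyclotomicClass (2 * p ^ m) (p ^ (m - j)) g d e i ∧
      ((p ^ m : ℕ) : ZMod (2 * p ^ m)) ∉
        scaledCyclotomicClass (2 * p ^ m) (2 * p ^ (m - j)) g d e i ∪
          scaledCyclotomicClass (2 * p ^ m) (p ^ (m - j)) g d e i := by
  obtain ⟨hj1, hjm⟩ := mem_Icc.mp hj
  have h0 : (0 : ZMod (2 * p ^ m)).val.gcd (2 * p ^ m) = 2 * p ^ (m - 0) := by simp
  have hpm : ((p ^ m : ℕ) : ZMod (2 * p ^ m)).val.gcd (2 * p ^ m) = p ^ (m - 0) := by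
    rw [ZMod.gcd_val_natCast, Nat.gcd_mul_left_right, Nat.sub_zero]
  refine ⟨?_, ?_⟩ <;> rintro (hy | hy)
  · have := eq_of_pow_sub_eq_pow_sub hp (Nat.zero_le m) hjm <| Nat.eq_of_mul_eq_mul_left two_pos <|
      h0.symm.trans (gcd_val_of_mem_two_mul_scaledCyclotomicClass hp hroot2 hj hy)
    omega
  · exact two_mul_pow_ne_pow hop _ _
      (h0.symm.trans (gcd_val_of_mem_pow_scaledCyclotomicClass hp hroot2 hj hy))
  · exact two_mul_pow_ne_pow hop _ _
      ((gcd_val_of_mem_two_mul_scaledCyclotomicClass hp hroot2 hj hy).symm.trans hpm)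
  · have := eq_of_pow_sub_eq_pow_sub hp (Nat.zero_le m) hjm <|
      hpm.symm.trans (gcd_val_of_mem_pow_scaledCyclotomicClass hp hroot2 hj hy)
    omega

theorem disjoint_scaledCyclotomicClasses (hp : p.Prime) (hop : Odd p) (hef : p - 1 = e * f)
    (hroot : ∀ j, 1 ≤ j → j ≤ m → orderOf (g : ZMod (p ^ j)) = φ (p ^ j))
    (hroot2 : ∀ j, 1 ≤ j → j ≤ m → orderOf (g : ZMod (2 * p ^ j)) = φ (2 * p ^ j))
    {j j' i i' : ℕ} (hj : j ∈ Icc 1 m) (hj' : j' ∈ Icc 1 m)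
    (hi : i < p ^ (j - 1) * f) (hi' : i' < p ^ (j' - 1) * f) :
    Disjoint (scaledCyclotomicClass (2 * p ^ m) (2 * p ^ (m - j)) g (p ^ (j - 1) * f) e i)
        (scaledCyclotomicClass (2 * p ^ m) (p ^ (m - j')) g (p ^ (j' - 1) * f) e i') ∧
      ((j, i) ≠ (j', i') →
        Disjoint (scaledCyclotomicClass (2 * p ^ m) (2 * p ^ (m - j)) g (p ^ (j - 1) * f) e i)
          (scaledCyclotomicClass (2 * p ^ m) (2 * p ^ (m - j')) g (p ^ (j' - 1) * f) e i') ∧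
        Disjoint (scaledCyclotomicClass (2 * p ^ m) (p ^ (m - j)) g (p ^ (j - 1) * f) e i)
          (scaledCyclotomicClass (2 * p ^ m) (p ^ (m - j')) g (p ^ (j' - 1) * f) e i')) := by
  obtain ⟨hj1, hjm⟩ := mem_Icc.mp hj
  have := hp.pos
  refine ⟨Set.disjoint_left.mpr fun y hy hy' => two_mul_pow_ne_pow hop _ _ <|
      (gcd_val_of_mem_two_mul_scaledCyclotomicClass hp hroot2 hj hy).symm.trans
        (gcd_val_of_mem_pow_scaledCyclotomicClass hp hroot2 hj' hy'), fun hne => ?_⟩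
  rcases eq_or_ne j j' with rfl | hjj
  · have hii : i ≠ i' := fun h => hne (h ▸ rfl)
    exact ⟨disjoint_scaledCyclotomicClass (two_mul_pow_sub_mul_pow hjm) (by positivity)
        ((hroot j hj1 hjm).trans (totient_prime_pow_eq_mul hp hef hj1)) hi hi' hii,
      disjoint_scaledCyclotomicClass (pow_sub_mul_two_mul_pow hjm) (by positivity)
        ((hroot2 j hj1 hjm).trans (totient_two_mul_prime_pow_eq_mul hp hop hef hj1)) hi hi' hii⟩
  · refine ⟨Set.disjoint_left.mpr fun y hy hy' => hjj ?_,
      Set.disjoint_left.mpr fun y hy hy' => hjj ?_⟩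
    · exact eq_of_pow_sub_eq_pow_sub hp hjm (mem_Icc.mp hj').2 <|
        Nat.eq_of_mul_eq_mul_left two_pos <|
          (gcd_val_of_mem_two_mul_scaledCyclotomicClass hp hroot2 hj hy).symm.trans
            (gcd_val_of_mem_two_mul_scaledCyclotomicClass hp hroot2 hj' hy')
    · exact eq_of_pow_sub_eq_pow_sub hp hjm (mem_Icc.mp hj').2 <|
        (gcd_val_of_mem_pow_scaledCyclotomicClass hp hroot2 hj hy).symm.trans
          (gcd_val_of_mem_pow_scaledCyclotomicClass hp hroot2 hj' hy')

end

theorem zmod_two_pm_partition_cyclotomic_general (p m e f g : ℕ) (hp : p.Prime) (hop : Odd p)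
    (hef : p - 1 = e * f)
    (hroot : ∀ j, 1 ≤ j → j ≤ m → orderOf (g : ZMod (p ^ j)) = Nat.totient (p ^ j))
    (hroot2 : ∀ j, 1 ≤ j → j ≤ m →
      orderOf (g : ZMod (2 * p ^ j)) = Nat.totient (2 * p ^ j)) :
    let E : ℕ → ℕ → Set (ZMod (2 * p ^ m)) := fun j i =>
      {y | ∃ t < e, y = ((2 * p ^ (m - j) * g ^ (i + p ^ (j - 1) * f * t) : ℕ) :
        ZMod (2 * p ^ m))}
    let G : ℕ → ℕ → Set (ZMod (2 * p ^ m)) := fun j i =>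
      {y | ∃ t < e, y = ((p ^ (m - j) * g ^ (i + p ^ (j - 1) * f * t) : ℕ) :
        ZMod (2 * p ^ m))}
    (Set.univ = insert (0 : ZMod (2 * p ^ m)) (insert ((p ^ m : ℕ) : ZMod (2 * p ^ m))
        (⋃ j ∈ Finset.Icc 1 m, ⋃ i ∈ Finset.range (p ^ (j - 1) * f), E j i ∪ G j i))) ∧
    (∀ j ∈ Finset.Icc 1 m, ∀ i < p ^ (j - 1) * f,
      (0 : ZMod (2 * p ^ m)) ∉ E j i ∪ G j i ∧
      ((p ^ m : ℕ) : ZMod (2 * p ^ m)) ∉ E j i ∪ G j i) ∧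
    (∀ j ∈ Finset.Icc 1 m, ∀ j' ∈ Finset.Icc 1 m,
      ∀ i < p ^ (j - 1) * f, ∀ i' < p ^ (j' - 1) * f,
        Disjoint (E j i) (G j' i') ∧
        ((j, i) ≠ (j', i') → Disjoint (E j i) (E j' i') ∧ Disjoint (G j i) (G j' i'))) := by
  intro E G
  refine ⟨?_, fun j hj i _ => zero_and_pow_notMem_scaledCyclotomicClass hp hop hroot2 hj,
    fun j hj j' hj' i hi i' hi' =>
      disjoint_scaledCyclotomicClasses hp hop hef hroot hroot2 hj hj' hi hi'⟩
  rw [eq_comm, Set.eq_univ_iff_forall]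
  intro x
  by_cases hx0 : x = 0
  · simp [hx0]
  by_cases hxp : x = ((p ^ m : ℕ) : ZMod (2 * p ^ m))
  · simp [hxp]
  obtain ⟨j, hj, i, hi, hx⟩ :=
    exists_mem_scaledCyclotomicClass_of_ne hp hop hef hroot hroot2 hx0 hxp
  simp only [Set.mem_insert_iff, Set.mem_iUnion]
  exact Or.inr (Or.inr ⟨j, hj, i, mem_range.mpr hi, hx⟩)

/-- `Z/2p^m Z` is the disjoint union of `{0}`, `{p^m}`, and the sets
`p^{m-j}·2·D_i^{(p^j)}` and `p^{m-j} D_i^{(2p^j)}` for `1 ≤ j ≤ m`, `0 ≤ i < d_j`. -/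
theorem zmod_two_pm_partition_cyclotomic (p m e f g : ℕ) (hp : p.Prime) (hop : Odd p)
    (hm : 1 ≤ m) (he : 0 < e) (hf : 0 < f) (hef : p - 1 = e * f) (hg : Odd g)
    (hroot : ∀ j, 1 ≤ j → j ≤ m → orderOf (g : ZMod (p ^ j)) = Nat.totient (p ^ j))
    (hroot2 : ∀ j, 1 ≤ j → j ≤ m →
      orderOf (g : ZMod (2 * p ^ j)) = Nat.totient (2 * p ^ j)) :
    let E : ℕ → ℕ → Set (ZMod (2 * p ^ m)) := fun j i =>
      {y | ∃ t < e, y = ((2 * p ^ (m - j) * g ^ (i + p ^ (j - 1) * f * t) : ℕ) :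
        ZMod (2 * p ^ m))}
    let G : ℕ → ℕ → Set (ZMod (2 * p ^ m)) := fun j i =>
      {y | ∃ t < e, y = ((p ^ (m - j) * g ^ (i + p ^ (j - 1) * f * t) : ℕ) :
        ZMod (2 * p ^ m))}
    (Set.univ = insert (0 : ZMod (2 * p ^ m)) (insert ((p ^ m : ℕ) : ZMod (2 * p ^ m))
        (⋃ j ∈ Finset.Icc 1 m, ⋃ i ∈ Finset.range (p ^ (j - 1) * f), E j i ∪ G j i))) ∧
    (∀ j ∈ Finset.Icc 1 m, ∀ i < p ^ (j - 1) * f,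
      (0 : ZMod (2 * p ^ m)) ∉ E j i ∪ G j i ∧
      ((p ^ m : ℕ) : ZMod (2 * p ^ m)) ∉ E j i ∪ G j i) ∧
    (∀ j ∈ Finset.Icc 1 m, ∀ j' ∈ Finset.Icc 1 m,
      ∀ i < p ^ (j - 1) * f, ∀ i' < p ^ (j' - 1) * f,
        Disjoint (E j i) (G j' i') ∧
        ((j, i) ≠ (j', i') → Disjoint (E j i) (E j' i') ∧ Disjoint (G j i) (G j' i'))) :=
  zmod_two_pm_partition_cyclotomic_general p m e f g hp hop hef hroot hroot2
end

section
/- With f = 2^r (r ≥ 1), δ_j = p^{j−1}f/2, and H̄_b^{(p^j)}(x) = Σ_{i=0}^{δ_j−1} Σ_{t ∈ p^{m−j}D_{i+b}^{(p^j)}} x^t evaluated at a primitive p^m-th root of unity β over F_2: H̄_b^{(p)}(β) + H̄_{b+f/2}^{(p)}(β) = 1, and for 2 ≤ j ≤ m, H̄_b^{(p^j)}(β) + H̄_{b+δ_j}^{(p^j)}(β) = 0. -/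
/-!
The two half-sums together run over the exponents `g ^ (b + k)`, `k < φ(p^j)`, which reduce
modulo `p^j` to all residues prime to `p`. So `H̄` sums the primitive `p^j`-th roots of unity, i.e.
the powers of `γ = β ^ p^(m-j)` with exponent prime to `p`: the full geometric sum of `γ` vanishes,
and what remains is minus the geometric sum of `γ ^ p`, which is `1` for `j = 1` and `0` otherwise.
In characteristic 2 the sign is irrelevant.
-/

open Finset
open scoped Nat

theorem Finset.sum_range_sum_range_add_mul {M : Type*} [AddCommMonoid M] (d e : ℕ) (f : ℕ → M) :
    ∑ i ∈ range d, ∑ t ∈ range e, f (i + d * t) = ∑ k ∈ range (d * e), f k := by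
  induction e with
  | zero => simp
  | succ e ih =>
    rw [Nat.mul_succ, sum_range_add, ← ih, ← sum_add_distrib]
    refine sum_congr rfl fun i _ => ?_
    rw [sum_range_succ, add_comm i]

theorem Finset.sum_halves_sum_range_add_mul {M : Type*} [AddCommMonoid M] {d : ℕ}
    (hd : Even d) (e b : ℕ) (f : ℕ → M) :
    ∑ i ∈ range (d / 2), ∑ t ∈ range e, f (b + i + d * t) +
        ∑ i ∈ range (d / 2), ∑ t ∈ range e, f (b + d / 2 + i + d * t) =
      ∑ k ∈ range (d * e), f (b + k) := by
  obtain ⟨δ, rfl⟩ := hd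
  rw [show (δ + δ) / 2 = δ by omega, ← sum_range_sum_range_add_mul, sum_range_add]
  simp only [add_assoc]

theorem sum_range_totient_pow_eq_sum_coprime {M : Type*} [AddCommMonoid M] {n g : ℕ}
    [NeZero n] (hg : orderOf (g : ZMod n) = φ n) (b : ℕ) {f : ℕ → M}
    (hf : Function.Periodic f n) :
    ∑ k ∈ range (φ n), f (g ^ (b + k)) = ∑ x ∈ range n with n.Coprime x, f x := by
  have hgu : IsUnit (g : ZMod n) :=
    (orderOf_pos_iff.mp (hg ▸ Nat.totient_pos.mpr (Nat.pos_of_neZero n))).isUnit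
  have hcast : ∀ k, ((g ^ (b + k) % n : ℕ) : ZMod n) = (g : ZMod n) ^ (b + k) := by
    intro k; push_cast [ZMod.natCast_mod]; rfl
  have hmaps : Set.MapsTo (fun k => g ^ (b + k) % n) (range (φ n))
      ({x ∈ range n | n.Coprime x} : Finset ℕ) := by
    intro k _
    refine mem_filter.mpr ⟨mem_range.mpr (Nat.mod_lt _ (Nat.pos_of_neZero n)), ?_⟩
    rw [Nat.coprime_comm, ← ZMod.isUnit_iff_coprime, hcast]
    exact hgu.pow _
  have hinj : Set.InjOn (fun k => g ^ (b + k) % n) (range (φ n)) := by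
    intro k₁ hk₁ k₂ hk₂ h
    have h' : ((g ^ (b + k₁) % n : ℕ) : ZMod n) = ((g ^ (b + k₂) % n : ℕ) : ZMod n) :=
      congrArg Nat.cast h
    rw [hcast, hcast, pow_add, pow_add] at h'
    exact pow_injOn_Iio_orderOf (by simpa [hg] using hk₁) (by simpa [hg] using hk₂)
      ((hgu.pow b).mul_left_cancel h')
  have hsurj := surjOn_of_injOn_of_card_le _ hmaps hinj
    (by rw [card_range, Nat.totient_eq_card_coprime])
  simp_rw [← hf.map_mod_nat (g ^ _)]
  exact sum_nbij _ hmaps hinj hsurj fun _ _ => rfl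

theorem IsPrimitiveRoot.sum_pow_filter_not_dvd {R : Type*} [CommRing R] [IsDomain R] {ζ : R}
    {p q : ℕ} (hζ : IsPrimitiveRoot ζ (p * q)) (hpq : 1 < p * q) :
    ∑ x ∈ range (p * q) with ¬ p ∣ x, ζ ^ x = -∑ y ∈ range q, (ζ ^ p) ^ y := by
  have hp : 0 < p := Nat.pos_of_mul_pos_right (by omega : 0 < p * q)
  have hmultiples : ∑ x ∈ range (p * q) with p ∣ x, ζ ^ x = ∑ y ∈ range q, (ζ ^ p) ^ y := by
    refine sum_nbij' (· / p) (p * ·) ?_ ?_ ?_ ?_ ?_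
    · intro x hx
      exact mem_range.mpr (Nat.div_lt_of_lt_mul (mem_range.mp (mem_filter.mp hx).1))
    · intro y hy
      exact mem_filter.mpr
        ⟨mem_range.mpr (Nat.mul_lt_mul_of_pos_left (mem_range.mp hy) hp), dvd_mul_right p y⟩
    · intro x hx
      exact Nat.mul_div_cancel' (mem_filter.mp hx).2
    · intro y _
      exact Nat.mul_div_cancel_left y hp
    · intro x hx
      rw [← pow_mul, Nat.mul_div_cancel' (mem_filter.mp hx).2]
  rw [eq_neg_iff_add_eq_zero, ← hmultiples, add_comm, sum_filter_add_sum_filter_not,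
    hζ.geom_sum_eq_zero hpq]

theorem IsPrimitiveRoot.sum_pow_coprime_prime_pow {R : Type*} [CommRing R] [IsDomain R] {ζ : R}
    {p j : ℕ} (hp : p.Prime) (hj : 1 ≤ j) (hζ : IsPrimitiveRoot ζ (p ^ j)) :
    ∑ x ∈ range (p ^ j) with (p ^ j).Coprime x, ζ ^ x = if j = 1 then -1 else 0 := by
  obtain ⟨i, rfl⟩ : ∃ i, j = i + 1 := ⟨j - 1, by omega⟩
  have hcop : ∀ x, (p ^ (i + 1)).Coprime x ↔ ¬ p ∣ x := fun x => by
    rw [Nat.coprime_pow_left_iff i.succ_pos, hp.coprime_iff_not_dvd]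
  simp_rw [hcop]
  rw [pow_succ'] at hζ ⊢
  rw [hζ.sum_pow_filter_not_dvd (by nlinarith [hp.two_le, Nat.one_le_pow i p hp.pos])]
  rcases i with _ | i
  · simp
  · have hζp : IsPrimitiveRoot (ζ ^ p) (p ^ (i + 1)) := hζ.pow (by have := hp.pos; positivity) rfl
    simp [hζp.geom_sum_eq_zero (Nat.one_lt_pow i.succ_ne_zero hp.one_lt)]

theorem Hbar_shift_sum_general (p m e f r g b : ℕ) (hp : p.Prime)
    (hm : 1 ≤ m) (hr : 1 ≤ r) (hf : f = 2 ^ r) (hef : p - 1 = e * f)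
    (hroot : ∀ j, 1 ≤ j → j ≤ m → orderOf (g : ZMod (p ^ j)) = Nat.totient (p ^ j))
    {F : Type*} [Field F] (hchar : CharP F 2) (β : F) (hβ : orderOf β = p ^ m) :
    let H : ℕ → ℕ → F := fun v j =>
      ∑ i ∈ Finset.range (p ^ (j - 1) * f / 2), ∑ t ∈ Finset.range e,
        β ^ (p ^ (m - j) * g ^ (v + i + p ^ (j - 1) * f * t))
    (H b 1 + H (b + f / 2) 1 = 1) ∧
    (∀ j, 2 ≤ j → j ≤ m → H b j + H (b + p ^ (j - 1) * f / 2) j = 0) := by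
  intro H
  have key : ∀ j, 1 ≤ j → j ≤ m →
      H b j + H (b + p ^ (j - 1) * f / 2) j = if j = 1 then -1 else 0 := by
    intro j hj hjm
    set γ := β ^ p ^ (m - j)
    have hγ : IsPrimitiveRoot γ (p ^ j) :=
      (IsPrimitiveRoot.iff_orderOf.mpr hβ).pow (pow_pos hp.pos m)
        (by rw [← pow_add]; congr 1; omega)
    have heven : Even (p ^ (j - 1) * f) :=
      (hf ▸ Nat.even_pow.mpr ⟨even_two, by omega⟩ : Even f).mul_left _
    have htot : p ^ (j - 1) * f * e = φ (p ^ j) := by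
      rw [Nat.totient_prime_pow hp hj, hef]; ring
    have hperiodic : Function.Periodic (γ ^ ·) (p ^ j) := fun x => by
      simp only [pow_add, hγ.pow_eq_one, mul_one]
    calc H b j + H (b + p ^ (j - 1) * f / 2) j
        = ∑ k ∈ range (p ^ (j - 1) * f * e), γ ^ g ^ (b + k) := by
          simp only [H, pow_mul]
          exact sum_halves_sum_range_add_mul heven e b (γ ^ g ^ ·)
      _ = ∑ x ∈ range (p ^ j) with (p ^ j).Coprime x, γ ^ x := by
          have : NeZero (p ^ j) := ⟨pow_ne_zero j hp.ne_zero⟩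
          rw [htot]
          exact sum_range_totient_pow_eq_sum_coprime (hroot j hj hjm) b hperiodic
      _ = if j = 1 then -1 else 0 := hγ.sum_pow_coprime_prime_pow hp hj
  have := hchar
  exact ⟨by simpa [CharTwo.neg_eq] using key 1 le_rfl hm,
    fun j hj hjm => by simpa [show j ≠ 1 by omega] using key j (by omega) hjm⟩

/-- Lemma 1 (Xiao et al., Lemma 4): with `f = 2^r`, `δ_j = p^{j-1} f / 2`,
and `H̄_b^{(p^j)}(β) = Σ_{i<δ_j} Σ_{t ∈ p^{m-j} D_{i+b}^{(p^j)}} β^t`,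
one has `H̄_b^{(p)}(β) + H̄_{b+f/2}^{(p)}(β) = 1` and, for `2 ≤ j ≤ m`,
`H̄_b^{(p^j)}(β) + H̄_{b+δ_j}^{(p^j)}(β) = 0`. -/
theorem Hbar_shift_sum (p m e f r g b : ℕ) (hp : p.Prime) (hop : Odd p)
    (hm : 1 ≤ m) (hr : 1 ≤ r) (hf : f = 2 ^ r) (he : 0 < e) (hef : p - 1 = e * f)
    (hroot : ∀ j, 1 ≤ j → j ≤ m → orderOf (g : ZMod (p ^ j)) = Nat.totient (p ^ j))
    {F : Type*} [Field F] (hchar : CharP F 2) (β : F) (hβ : orderOf β = p ^ m) :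
    let H : ℕ → ℕ → F := fun v j =>
      ∑ i ∈ Finset.range (p ^ (j - 1) * f / 2), ∑ t ∈ Finset.range e,
        β ^ (p ^ (m - j) * g ^ (v + i + p ^ (j - 1) * f * t))
    (H b 1 + H (b + f / 2) 1 = 1) ∧
    (∀ j, 2 ≤ j → j ≤ m → H b j + H (b + p ^ (j - 1) * f / 2) j = 0) :=
  Hbar_shift_sum_general p m e f r g b hp hm hr hf hef hroot hchar β hβ
end

section
/- Let a ∈ p^l D_k^{(p^{m−l})} with 0 ≤ l ≤ m−1. Then H̄_b^{(p^{l+1})}(β^a) = (p^l−1)/2 + H̄_{b+k}^{(p)}(β) in GF(2^n), where (p^l−1)/2 is read modulo 2. -/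
/-!
With `γ = β ^ p ^ (m - 1)`, a primitive `p`-th root of unity, every term on either side is a value
of `T j = γ ^ g ^ j`. Since `g` is a primitive root mod `p`, `T` has period `p - 1 = e * f`, and
its sum over one period is `∑_{y ∈ (ℤ/p)ˣ} γ ^ y = -1 = 1`. On the left, `a` shifts the index `j`
by `k` and turns the inner progression `j = c + f * t` into `c + f * (u + p ^ l * t)`; as `p ^ l` is
prime to `e`, this only permutes the inner sum. The outer range `p ^ l * f / 2` then consists of
`(p ^ l - 1) / 2` full periods of length `f`, each contributing `1`, followed by the `f / 2`
terms of the right-hand side.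
-/

open Finset Function

theorem Nat.odd_mul_div_two {n : ℕ} (hn : Odd n) (f : ℕ) : n * f / 2 = (n - 1) / 2 * f + f / 2 := by
  obtain ⟨Q, rfl⟩ := hn
  rw [Nat.add_sub_cancel, Nat.mul_div_cancel_left Q two_pos, add_mul, one_mul, mul_assoc,
    Nat.mul_add_div two_pos]

section PeriodicSums

variable {M : Type*} [AddCommMonoid M]

theorem Finset.sum_range_natCast_eq_sum_zmod (N : ℕ) [NeZero N] (ψ : ZMod N → M) :
    ∑ t ∈ range N, ψ t = ∑ x : ZMod N, ψ x :=
  sum_nbij' (fun t => (t : ZMod N)) ZMod.val (by simp) (by simp [ZMod.val_lt])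
    (by simp +contextual [ZMod.val_natCast, Nat.mod_eq_of_lt]) (by simp) (by simp)

theorem Finset.sum_range_mul_eq_sum_sum (φ : ℕ → M) (f e : ℕ) :
    ∑ j ∈ range (f * e), φ j = ∑ i ∈ range f, ∑ t ∈ range e, φ (i + f * t) := by
  induction e with
  | zero => simp
  | succ e ih =>
    rw [Nat.mul_succ, sum_range_add, ih, ← sum_add_distrib]
    refine sum_congr rfl fun i _ => ?_
    rw [sum_range_succ, add_comm (f * e) i]

variable {φ : ℕ → M} {N : ℕ}

theorem Function.Periodic.sum_range_add_mul (hφ : Periodic φ N) (u : ℕ) {s : ℕ}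
    (hs : s.Coprime N) : ∑ t ∈ range N, φ (u + s * t) = ∑ t ∈ range N, φ t := by
  rcases eq_or_ne N 0 with rfl | hN
  · simp
  have : NeZero N := ⟨hN⟩
  set ψ : ZMod N → M := fun x => φ x.val
  have hφψ (n : ℕ) : φ n = ψ n := by simp [ψ, ZMod.val_natCast, hφ.map_mod_nat]
  calc ∑ t ∈ range N, φ (u + s * t)
      = ∑ t ∈ range N, ψ (u + s * (t : ZMod N)) := by simp [hφψ]
    _ = ∑ x : ZMod N, ψ (u + s * x) := sum_range_natCast_eq_sum_zmod N fun x => ψ (u + s * x)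
    _ = ∑ x : ZMod N, ψ x := by
      simpa [ZMod.coe_unitOfCoprime] using
        ((Units.mulLeft (ZMod.unitOfCoprime s hs)).trans (Equiv.addLeft (u : ZMod N))).sum_comp ψ
    _ = ∑ t ∈ range N, φ t := by simp [hφψ, sum_range_natCast_eq_sum_zmod]

theorem Function.Periodic.sum_range_const_add (hφ : Periodic φ N) (c : ℕ) :
    ∑ j ∈ range N, φ (c + j) = ∑ j ∈ range N, φ j := by
  simpa using hφ.sum_range_add_mul c (Nat.coprime_one_left N)

theorem Function.Periodic.sum_range_nat_mul_add (hφ : Periodic φ N) (q r : ℕ) :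
    ∑ j ∈ range (q * N + r), φ j = q • ∑ j ∈ range N, φ j + ∑ j ∈ range r, φ j := by
  induction q with
  | zero => simp
  | succ q ih =>
    have hshift (j : ℕ) : φ (N + j) = φ j := by rw [add_comm]; exact hφ j
    rw [add_mul, one_mul, add_right_comm, add_comm, Finset.sum_range_add]
    simp only [hshift, ih, succ_nsmul', add_assoc]

theorem Function.Periodic.comp_const_add_mul {α : Type*} {T : ℕ → α} {f e : ℕ}
    (hT : Periodic T (f * e)) (c : ℕ) : Periodic (fun t => T (c + f * t)) e :=
  fun t => by simpa only [mul_add, add_assoc] using hT (c + f * t)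

theorem Function.Periodic.sum_range_sum_range_nat_mul_add {T : ℕ → M} {f e : ℕ}
    (hT : Periodic T (f * e)) (c q r : ℕ) :
    ∑ i ∈ range (q * f + r), ∑ t ∈ range e, T (c + i + f * t)
      = q • ∑ j ∈ range (f * e), T j + ∑ i ∈ range r, ∑ t ∈ range e, T (c + i + f * t) := by
  have hblock : Periodic (fun i => ∑ t ∈ range e, T (c + i + f * t)) f := fun i => by
    refine Eq.trans ?_ ((hT.comp_const_add_mul (c + i)).sum_range_add_mul 1 e.coprime_one_left)
    exact sum_congr rfl fun t _ => by ring_nf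
  rw [hblock.sum_range_nat_mul_add, ← hT.sum_range_const_add c, sum_range_mul_eq_sum_sum]
  simp only [add_assoc]

end PeriodicSums

namespace IsPrimitiveRoot

variable {R : Type*} [CommRing R] {p : ℕ} {γ : R}

theorem pow_pow_sub_one {M : Type*} [CommMonoid M] {ζ : M} {m : ℕ}
    (hζ : IsPrimitiveRoot ζ (p ^ m)) (hp : p ≠ 0) (hm : 1 ≤ m) :
    IsPrimitiveRoot (ζ ^ p ^ (m - 1)) p := by
  have := hζ.pow_of_dvd (pow_ne_zero (m - 1) hp) (pow_dvd_pow p (m.sub_le 1))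
  rwa [Nat.pow_div (m.sub_le 1) (Nat.pos_of_ne_zero hp), Nat.sub_sub_self hm, pow_one] at this

theorem pow_val_natCast (hγ : IsPrimitiveRoot γ p) (n : ℕ) : γ ^ (n : ZMod p).val = γ ^ n := by
  rw [ZMod.val_natCast, hγ.eq_orderOf, pow_mod_orderOf]

theorem sum_pow_val_zmod [IsDomain R] [NeZero p] (hγ : IsPrimitiveRoot γ p) (hp : 1 < p) :
    ∑ x : ZMod p, γ ^ x.val = 0 := by
  rw [← sum_range_natCast_eq_sum_zmod]
  simp only [hγ.pow_val_natCast]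
  exact hγ.geom_sum_eq_zero hp

theorem pow_pow_eq_pow_val (hγ : IsPrimitiveRoot γ p) (g j : ℕ) :
    γ ^ g ^ j = γ ^ ((g : ZMod p) ^ j).val := by
  rw [← Nat.cast_pow, hγ.pow_val_natCast]

theorem periodic_pow_pow {g : ℕ} (hγ : IsPrimitiveRoot γ p)
    (hg : orderOf (g : ZMod p) = p - 1) : Periodic (fun j => γ ^ g ^ j) (p - 1) := by
  intro j
  dsimp only
  rw [hγ.pow_pow_eq_pow_val g, hγ.pow_pow_eq_pow_val g, pow_add, ← hg, pow_orderOf_eq_one, mul_one]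

theorem sum_range_pow_eq_sum_erase_zero {K M : Type*} [Field K] [Fintype K] [DecidableEq K]
    [AddCommMonoid M] {ζ : K} (hζ : IsPrimitiveRoot ζ (Fintype.card K - 1)) (φ : K → M) :
    ∑ j ∈ range (Fintype.card K - 1), φ (ζ ^ j) = ∑ x ∈ univ.erase 0, φ x := by
  have : NeZero (Fintype.card K - 1) := ⟨by have := Fintype.one_lt_card (α := K); omega⟩
  refine sum_nbij (ζ ^ ·) (fun j _ => ?_) (fun i hi j hj hij => ?_) (fun x hx => ?_) fun _ _ => rfl
  · simpa using pow_ne_zero j (hζ.ne_zero (NeZero.ne _))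
  · exact hζ.pow_inj (mem_range.1 hi) (mem_range.1 hj) hij
  · obtain ⟨j, hj, rfl⟩ :=
      hζ.eq_pow_of_pow_eq_one (FiniteField.pow_card_sub_one_eq_one x (by simpa using hx))
    exact ⟨j, by simpa using hj, rfl⟩

theorem sum_range_pow_pow [IsDomain R] {g : ℕ} (hp : p.Prime) (hγ : IsPrimitiveRoot γ p)
    (hg : orderOf (g : ZMod p) = p - 1) : ∑ j ∈ range (p - 1), γ ^ g ^ j = -1 := by
  have := Fact.mk hp
  have hG : IsPrimitiveRoot (g : ZMod p) (Fintype.card (ZMod p) - 1) := by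
    rw [ZMod.card, ← hg]; exact IsPrimitiveRoot.orderOf _
  have hsum := hγ.sum_pow_val_zmod hp.one_lt
  rw [← add_sum_erase _ _ (mem_univ 0), ZMod.val_zero, pow_zero,
    ← hG.sum_range_pow_eq_sum_erase_zero, ZMod.card] at hsum
  simp only [hγ.pow_pow_eq_pow_val g]
  exact eq_neg_of_add_eq_zero_right hsum

end IsPrimitiveRoot

theorem Hbar_eval_middle_level_general (p m e f g b l k t₀ : ℕ) (hp : p.Prime) (hop : Odd p)
    (hm : 1 ≤ m) (hef : p - 1 = e * f)
    (hroot : ∀ j, 1 ≤ j → j ≤ m → orderOf (g : ZMod (p ^ j)) = Nat.totient (p ^ j))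
    (hl : l ≤ m - 1)
    {F : Type*} [Field F] (hchar : CharP F 2) (β : F) (hβ : orderOf β = p ^ m) :
    -- `a` is a representative of an element of `p^l D_k^{(p^{m-l})}`
    let a : ℕ := p ^ l * g ^ (k + p ^ (m - l - 1) * f * t₀)
    ∑ i ∈ Finset.range (p ^ l * f / 2), ∑ t ∈ Finset.range e,
        β ^ (a * (p ^ (m - (l + 1)) * g ^ (b + i + p ^ l * f * t)))
      = (((p ^ l - 1) / 2 : ℕ) : F) +
        ∑ i ∈ Finset.range (f / 2), ∑ t ∈ Finset.range e,
          β ^ (p ^ (m - 1) * g ^ (b + k + i + f * t)) := by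
  intro a
  have hg : orderOf (g : ZMod p) = p - 1 := by
    have h := hroot 1 le_rfl hm
    rwa [pow_one, Nat.totient_prime hp] at h
  have hγ : IsPrimitiveRoot (β ^ p ^ (m - 1)) p :=
    (hβ ▸ IsPrimitiveRoot.orderOf β).pow_pow_sub_one hp.ne_zero hm
  set T : ℕ → F := fun j => (β ^ p ^ (m - 1)) ^ g ^ j
  have hT : Periodic T (f * e) := by rw [mul_comm, ← hef]; exact hγ.periodic_pow_pow hg
  have hsumT : ∑ j ∈ range (f * e), T j = -1 := by
    rw [mul_comm, ← hef]; exact hγ.sum_range_pow_pow hp hg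
  have hcop : (p ^ l).Coprime e := by
    have hpe : p.Coprime (p - 1) := (Nat.coprime_self_sub_right hp.one_le).2 p.coprime_one_right
    exact (hpe.coprime_dvd_right ⟨f, hef⟩).pow_left l
  have hexp (i t : ℕ) : a * (p ^ (m - (l + 1)) * g ^ (b + i + p ^ l * f * t))
      = p ^ (m - 1) * g ^ (b + k + i + f * (p ^ (m - l - 1) * t₀ + p ^ l * t)) := by
    simp only [a]
    rw [show m - 1 = l + (m - (l + 1)) by omega, show m - l - 1 = m - (l + 1) by omega]
    ring
  have hLHS : ∑ i ∈ range (p ^ l * f / 2), ∑ t ∈ range e,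
      β ^ (a * (p ^ (m - (l + 1)) * g ^ (b + i + p ^ l * f * t)))
        = ∑ i ∈ range (p ^ l * f / 2), ∑ t ∈ range e, T (b + k + i + f * t) := by
    refine sum_congr rfl fun i _ => ?_
    simp only [hexp, pow_mul]
    exact (hT.comp_const_add_mul _).sum_range_add_mul _ hcop
  have := hchar
  rw [hLHS, Nat.odd_mul_div_two hop.pow, hT.sum_range_sum_range_nat_mul_add, hsumT,
    nsmul_eq_mul, mul_neg_one, CharTwo.neg_eq]
  simp only [T, pow_mul]

/-- Lemma 2(2): for `a ∈ p^l D_k^{(p^{m-l})}` with `0 ≤ l ≤ m-1`,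
`H̄_b^{(p^{l+1})}(β^a) = (p^l - 1)/2 + H̄_{b+k}^{(p)}(β)` (the integer
`(p^l - 1)/2` being read modulo 2). -/
theorem Hbar_eval_middle_level (p m e f r g b l k t₀ : ℕ) (hp : p.Prime) (hop : Odd p)
    (hm : 1 ≤ m) (hr : 1 ≤ r) (hf : f = 2 ^ r) (he : 0 < e) (hef : p - 1 = e * f)
    (hroot : ∀ j, 1 ≤ j → j ≤ m → orderOf (g : ZMod (p ^ j)) = Nat.totient (p ^ j))
    (hl : l ≤ m - 1) (ht₀ : t₀ < e)
    {F : Type*} [Field F] (hchar : CharP F 2) (β : F) (hβ : orderOf β = p ^ m) :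
    -- `a` is a representative of an element of `p^l D_k^{(p^{m-l})}`
    let a : ℕ := p ^ l * g ^ (k + p ^ (m - l - 1) * f * t₀)
    ∑ i ∈ Finset.range (p ^ l * f / 2), ∑ t ∈ Finset.range e,
        β ^ (a * (p ^ (m - (l + 1)) * g ^ (b + i + p ^ l * f * t)))
      = (((p ^ l - 1) / 2 : ℕ) : F) +
        ∑ i ∈ Finset.range (f / 2), ∑ t ∈ Finset.range e,
          β ^ (p ^ (m - 1) * g ^ (b + k + i + f * t)) :=
  Hbar_eval_middle_level_general p m e f g b l k t₀ hp hop hm hef hroot hl hchar β hβ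
end
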